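/- arXiv:2405.12740 — 2 statements merged into one kernel-verified Lean document; each statement's English description precedes it below -/
import Mathlib

section
/- Let Ω = B_R(0) ⊂ ℝ^N be a ball, and let u, v be C^2 radial functions on Ω solving -(r^{N-1} u')' = r^{N-1} H_v(r,u,v) and -(r^{N-1} v')' = r^{N-1} H_u(r,u,v) on (0,R), with u'(0) = v'(0) = 0 and u(R) = v(R) = 0. Assume H_u(r,s,t)/s > 0 and H_v(r,s,t)/t > 0 for all s,t ≠ 0. If v > 0 on [0,R), then u' < 0 on (0,R), hence u is strictly decreasing and u > 0 on [0,R). -/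
open Set Filter Topology

/-- Part A of the profile proposition on a ball: for the radial Hamiltonian system
`-(r^{N-1}u')' = r^{N-1} H_v(r,u,v)`, `-(r^{N-1}v')' = r^{N-1} H_u(r,u,v)` on `(0,R)`
with `u'(0)=v'(0)=0`, `u(R)=v(R)=0`, under the coupling condition `H_u/s > 0`,
`H_v/t > 0` for `s,t ≠ 0`: if `v > 0` on `[0,R)` then `u' < 0` on `(0,R)`, so `u`
is strictly decreasing on `[0,R]` and `u > 0` on `[0,R)`. -/
theorem radial_profile_ball_positive (N : ℕ) (hN : 2 ≤ N) (R : ℝ) (hR : 0 < R)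
    (u v : ℝ → ℝ) (Hu Hv : ℝ → ℝ → ℝ → ℝ)
    (hu : ContDiffOn ℝ 2 u (Icc 0 R)) (hv : ContDiffOn ℝ 2 v (Icc 0 R))
    (hequ : ∀ r ∈ Ioo (0:ℝ) R,
      deriv (fun ρ => ρ ^ ((N : ℝ) - 1) * deriv u ρ) r
        = -(r ^ ((N : ℝ) - 1) * Hv r (u r) (v r)))
    (heqv : ∀ r ∈ Ioo (0:ℝ) R,
      deriv (fun ρ => ρ ^ ((N : ℝ) - 1) * deriv v ρ) r
        = -(r ^ ((N : ℝ) - 1) * Hu r (u r) (v r)))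
    (hu0 : deriv u 0 = 0) (hv0 : deriv v 0 = 0)
    (huR : u R = 0) (hvR : v R = 0)
    (hH1u : ∀ r ∈ Icc (0:ℝ) R, ∀ s t : ℝ, s ≠ 0 → 0 < Hu r s t / s)
    (hH1v : ∀ r ∈ Icc (0:ℝ) R, ∀ s t : ℝ, t ≠ 0 → 0 < Hv r s t / t)
    (hvpos : ∀ r ∈ Ico (0:ℝ) R, 0 < v r) :
    (∀ r ∈ Ioo (0:ℝ) R, deriv u r < 0) ∧
      StrictAntiOn u (Icc 0 R) ∧ (∀ r ∈ Ico (0:ℝ) R, 0 < u r) := by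
  have hN1 : (0:ℝ) < (N:ℝ) - 1 := by
    have : (2:ℝ) ≤ (N:ℝ) := by exact_mod_cast hN
    linarith
  set w : ℝ → ℝ := fun ρ => ρ ^ ((N : ℝ) - 1) * deriv u ρ with hw
  -- Hv is positive on [0,R)
  have hHvpos : ∀ r ∈ Ioo (0:ℝ) R, 0 < Hv r (u r) (v r) := by
    intro r hr
    have hvr : 0 < v r := hvpos r ⟨hr.1.le, hr.2⟩
    have hdiv := hH1v r ⟨hr.1.le, hr.2.le⟩ (u r) (v r) hvr.ne'
    have := mul_pos hdiv hvr
    rwa [div_mul_cancel₀ _ hvr.ne'] at this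
  -- deriv of w is negative on (0,R)
  have hwderiv : ∀ r ∈ Ioo (0:ℝ) R, deriv w r < 0 := by
    intro r hr
    rw [hw, hequ r hr]
    have := mul_pos (Real.rpow_pos_of_pos hr.1 ((N:ℝ)-1)) (hHvpos r hr)
    linarith
  have hwcont : ContinuousOn w (Ioo 0 R) := by
    intro r hr
    exact (differentiableAt_of_deriv_ne_zero (hwderiv r hr).ne).continuousAt.continuousWithinAt
  have hwanti : StrictAntiOn w (Ioo 0 R) := by
    apply strictAntiOn_of_deriv_neg (convex_Ioo 0 R) hwcont
    rw [interior_Ioo]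
    exact hwderiv
  -- w tends to 0 at 0⁺
  have uD : UniqueDiffOn ℝ (Icc (0:ℝ) R) := uniqueDiffOn_Icc hR
  set g : ℝ → ℝ := derivWithin u (Icc 0 R) with hgdef
  have hgc : ContinuousOn g (Icc 0 R) :=
    hu.continuousOn_derivWithin uD (by norm_num)
  have hIoo_mem : Ioo (0:ℝ) R ∈ 𝓝[>] (0:ℝ) :=
    Ioo_mem_nhdsGT_of_mem ⟨le_refl 0, hR⟩
  have hgderiv : ∀ ρ ∈ Ioo (0:ℝ) R, g ρ = deriv u ρ := by
    intro ρ hρ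
    exact derivWithin_of_mem_nhds (Icc_mem_nhds hρ.1 hρ.2)
  have htend : Filter.Tendsto w (𝓝[>] (0:ℝ)) (𝓝 0) := by
    have h1 : Filter.Tendsto (fun ρ : ℝ => ρ ^ ((N:ℝ)-1)) (𝓝 0) (𝓝 0) := by
      have hc : ContinuousAt (fun ρ : ℝ => ρ ^ ((N:ℝ)-1)) 0 :=
        Real.continuousAt_rpow_const 0 ((N:ℝ)-1) (Or.inr hN1.le)
      have : (0:ℝ) ^ ((N:ℝ)-1) = 0 := Real.zero_rpow hN1.ne'
      simpa [this] using hc.tendsto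
    have h2 : Filter.Tendsto g (𝓝[>] (0:ℝ)) (𝓝 (g 0)) := by
      have := (hgc 0 ⟨le_refl 0, hR.le⟩).mono Ioc_subset_Icc_self
      rwa [ContinuousWithinAt, nhdsWithin_Ioc_eq_nhdsGT hR] at this
    have hmul : Filter.Tendsto (fun ρ : ℝ => ρ ^ ((N:ℝ)-1) * g ρ) (𝓝[>] (0:ℝ))
        (𝓝 (0 * g 0)) := (h1.mono_left nhdsWithin_le_nhds).mul h2
    rw [zero_mul] at hmul
    apply hmul.congr'
    filter_upwards [hIoo_mem] with ρ hρ
    rw [hw, hgderiv ρ hρ]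
  -- w is nonpositive, hence negative, on (0,R)
  have hw_nonpos : ∀ r ∈ Ioo (0:ℝ) R, w r ≤ 0 := by
    intro r hr
    refine ge_of_tendsto htend ?_
    filter_upwards [hIoo_mem, mem_nhdsWithin_of_mem_nhds (Iio_mem_nhds hr.1)] with ρ hρ hρr
    exact (hwanti hρ hr hρr).le
  have hw_neg : ∀ r ∈ Ioo (0:ℝ) R, w r < 0 := by
    intro r hr
    have h2 : r/2 ∈ Ioo (0:ℝ) R := ⟨half_pos hr.1, lt_trans (half_lt_self hr.1) hr.2⟩
    exact lt_of_lt_of_le (hwanti h2 hr (half_lt_self hr.1)) (hw_nonpos _ h2)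
  have part1 : ∀ r ∈ Ioo (0:ℝ) R, deriv u r < 0 := by
    intro r hr
    have hp := Real.rpow_pos_of_pos hr.1 ((N:ℝ)-1)
    have hwr := hw_neg r hr
    by_contra h
    push_neg at h
    have : 0 ≤ w r := mul_nonneg hp.le h
    linarith
  have part2 : StrictAntiOn u (Icc 0 R) := by
    apply strictAntiOn_of_deriv_neg (convex_Icc 0 R) hu.continuousOn
    rw [interior_Icc]
    exact part1
  refine ⟨part1, part2, ?_⟩
  intro r hr
  have : u R < u r := part2 ⟨hr.1, hr.2.le⟩ ⟨hR.le, le_refl R⟩ hr.2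
  rwa [huR] at this
end

section
/- Suppose u, v are C^2 radial solutions on the ball B_R with u'(0)=v'(0)=0, u(R)=v(R)=0, satisfying the radial system -(r^{N-1}u')' = r^{N-1}H_v(u,v), -(r^{N-1}v')' = r^{N-1}H_u(u,v), with H_u(s,t)/s > 0 and H_v(s,t)/t > 0 for s,t ≠ 0. If v has exactly 2 nodal zones, with v > 0 on [0,t), v(t)=0, v < 0 on (t,R), then: u has exactly one interior zero; u > 0 on its first nodal zone; u has exactly one critical point σ ∈ (t, R), u is strictly decreasing on (0,σ) and strictly increasing on (σ,R). -/
open Set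

/-! The flux `F r = r ^ (N - 1) * u' r` vanishes at `0` and, by the equation for `u`, is strictly
decreasing where `v > 0` and strictly increasing where `v < 0`. Hence either `F < 0` on `(0, R)`,
or `F` changes sign exactly once, at some `σ > t₀`. In the first case `u` decreases to `u R = 0`,
so `u > 0`; then `v` is strictly superharmonic, hence positive on `[0, R)`, contradicting
`v t₀ = 0`. In the second case `u` decreases on `[0, σ]` and increases to `0` on `[σ, R]`; if it
had no zero it would be negative on `(0, R)`, and then `-v` would be positive on `[0, R)`,
contradicting `v 0 > 0`. -/

-- `derivWithin` on the closed interval makes the flux continuous on `[0, R]` and zero at `0`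
-- for `α > 0`, with no condition on `f` at the centre.
noncomputable def radialFlux (α R : ℝ) (f : ℝ → ℝ) (r : ℝ) : ℝ :=
  r ^ α * derivWithin f (Icc 0 R) r

def IsRadialSolution (α : ℝ) (f h : ℝ → ℝ) (s : Set ℝ) : Prop :=
  ∀ r ∈ s, deriv (fun ρ => ρ ^ α * deriv f ρ) r = -(r ^ α * h r)

lemma neg_of_div_pos_of_neg {a b : ℝ} (h : 0 < a / b) (hb : b < 0) : a < 0 :=
  neg_pos.1 <| (div_pos_iff_of_pos_right (neg_pos.2 hb)).1 (by rwa [neg_div_neg_eq])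

section VShaped

variable {F : ℝ → ℝ} {a b c : ℝ}

lemma neg_or_exists_sign_change_of_strictAntiOn_of_strictMonoOn (hac : a < c)
    (hF_anti : StrictAntiOn F (Icc a c)) (hF_mono : StrictMonoOn F (Icc c b))
    (hF_cont : ContinuousOn F (Icc c b)) (hFa : F a = 0) :
    (∀ r ∈ Ioo a b, F r < 0) ∨
      ∃ σ ∈ Ioo c b, F σ = 0 ∧ (∀ r ∈ Ioo a σ, F r < 0) ∧ ∀ r ∈ Ioo σ b, 0 < F r := by
  have hF_left : ∀ r ∈ Ioc a c, F r < 0 := fun r hr =>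
    hFa ▸ hF_anti (left_mem_Icc.2 hac.le) (Ioc_subset_Icc_self hr) hr.1
  by_cases hpos : ∃ r ∈ Ioo c b, 0 < F r
  · obtain ⟨r₁, hr₁, hFr₁⟩ := hpos
    obtain ⟨σ, hσ, hFσ⟩ := intermediate_value_Ioo hr₁.1.le
      (hF_cont.mono (Icc_subset_Icc_right hr₁.2.le)) ⟨hF_left c ⟨hac, le_rfl⟩, hFr₁⟩
    have hσb : σ < b := hσ.2.trans hr₁.2
    refine Or.inr ⟨σ, ⟨hσ.1, hσb⟩, hFσ, fun r hr => ?_, fun r hr => ?_⟩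
    · rcases le_or_gt r c with hrc | hcr
      · exact hF_left r ⟨hr.1, hrc⟩
      · exact hFσ ▸ hF_mono ⟨hcr.le, (hr.2.trans hσb).le⟩ ⟨hσ.1.le, hσb.le⟩ hr.2
    · exact hFσ ▸ hF_mono ⟨hσ.1.le, hσb.le⟩ ⟨(hσ.1.trans hr.1).le, hr.2.le⟩ hr.1
  · push Not at hpos
    refine Or.inl fun r hr => ?_
    rcases le_or_gt r c with hrc | hcr
    · exact hF_left r ⟨hr.1, hrc⟩
    · have hmid : (r + b) / 2 ∈ Ioo c b := ⟨by linarith [hr.2], by linarith [hr.2]⟩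
      calc F r < F ((r + b) / 2) :=
            hF_mono ⟨hcr.le, hr.2.le⟩ ⟨hmid.1.le, hmid.2.le⟩ (by linarith [hr.2])
        _ ≤ 0 := hpos _ hmid

lemma neg_or_exists_zero_of_strictAntiOn_of_strictMonoOn (hac : a ≤ c) (hcb : c < b)
    (hF_anti : StrictAntiOn F (Icc a c)) (hF_mono : StrictMonoOn F (Icc c b))
    (hF_cont : ContinuousOn F (Icc a c)) (hFb : F b = 0) :
    (∀ r ∈ Ioo a b, F r < 0) ∨
      ∃ z ∈ Ioo a c, F z = 0 ∧ (∀ r ∈ Ico a z, 0 < F r) ∧ ∀ r ∈ Ioo z b, F r < 0 := by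
  have hF_right : ∀ r ∈ Ico c b, F r < 0 := fun r hr =>
    hFb ▸ hF_mono (Ico_subset_Icc_self hr) (right_mem_Icc.2 hcb.le) hr.2
  by_cases hpos : 0 < F a
  · obtain ⟨z, hz, hFz⟩ := intermediate_value_Ioo' hac hF_cont
      ⟨hF_right c ⟨le_rfl, hcb⟩, hpos⟩
    refine Or.inr ⟨z, hz, hFz, fun r hr => ?_, fun r hr => ?_⟩
    · exact hFz ▸ hF_anti ⟨hr.1, (hr.2.trans hz.2).le⟩ ⟨hz.1.le, hz.2.le⟩ hr.2
    · rcases le_or_gt r c with hrc | hcr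
      · exact hFz ▸ hF_anti ⟨hz.1.le, hz.2.le⟩ ⟨(hz.1.trans hr.1).le, hrc⟩ hr.1
      · exact hF_right r ⟨hcr.le, hr.2⟩
  · push Not at hpos
    refine Or.inl fun r hr => ?_
    rcases le_or_gt r c with hrc | hcr
    · exact (hF_anti (left_mem_Icc.2 hac) ⟨hr.1.le, hrc⟩ hr.1).trans_le hpos
    · exact hF_right r ⟨hcr.le, hr.2⟩

end VShaped

section RadialFlux

variable {α R : ℝ} {f h : ℝ → ℝ}

lemma radialFlux_zero (hα : α ≠ 0) : radialFlux α R f 0 = 0 := by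
  rw [radialFlux, Real.zero_rpow hα, zero_mul]

lemma continuousOn_radialFlux (hα : 0 ≤ α) (hR : 0 < R) (hf : ContDiffOn ℝ 2 f (Icc 0 R)) :
    ContinuousOn (radialFlux α R f) (Icc 0 R) :=
  (continuous_id.rpow_const fun _ => Or.inr hα).continuousOn.mul
    (hf.continuousOn_derivWithin (uniqueDiffOn_Icc hR) (by norm_num))

lemma radialFlux_eventuallyEq {r : ℝ} (hr : r ∈ Ioo 0 R) :
    radialFlux α R f =ᶠ[nhds r] fun ρ => ρ ^ α * deriv f ρ := by
  filter_upwards [Ioo_mem_nhds hr.1 hr.2] with ρ hρ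
  rw [radialFlux, derivWithin_of_mem_nhds (Icc_mem_nhds hρ.1 hρ.2)]

lemma radialFlux_neg_iff {r : ℝ} (hr : r ∈ Ioo 0 R) :
    radialFlux α R f r < 0 ↔ deriv f r < 0 := by
  simp [(radialFlux_eventuallyEq hr).eq_of_nhds, mul_neg_iff, Real.rpow_pos_of_pos hr.1,
    (Real.rpow_pos_of_pos hr.1 α).not_gt]

lemma radialFlux_pos_iff {r : ℝ} (hr : r ∈ Ioo 0 R) :
    0 < radialFlux α R f r ↔ 0 < deriv f r := by
  rw [(radialFlux_eventuallyEq hr).eq_of_nhds,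
    mul_pos_iff_of_pos_left (Real.rpow_pos_of_pos hr.1 α)]

lemma radialFlux_eq_zero_iff {r : ℝ} (hr : r ∈ Ioo 0 R) :
    radialFlux α R f r = 0 ↔ deriv f r = 0 := by
  rw [(radialFlux_eventuallyEq hr).eq_of_nhds, mul_eq_zero,
    or_iff_right (Real.rpow_pos_of_pos hr.1 α).ne']

lemma strictAntiOn_of_radialFlux_neg {a b : ℝ} (ha : 0 ≤ a) (hb : b ≤ R)
    (hf : ContDiffOn ℝ 2 f (Icc 0 R)) (hF : ∀ r ∈ Ioo a b, radialFlux α R f r < 0) :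
    StrictAntiOn f (Icc a b) := by
  refine strictAntiOn_of_deriv_neg (convex_Icc a b)
    (hf.continuousOn.mono (Icc_subset_Icc ha hb)) ?_
  rw [interior_Icc]
  exact fun r hr => (radialFlux_neg_iff ⟨ha.trans_lt hr.1, hr.2.trans_le hb⟩).1 (hF r hr)

lemma strictMonoOn_of_radialFlux_pos {a b : ℝ} (ha : 0 ≤ a) (hb : b ≤ R)
    (hf : ContDiffOn ℝ 2 f (Icc 0 R)) (hF : ∀ r ∈ Ioo a b, 0 < radialFlux α R f r) :
    StrictMonoOn f (Icc a b) := by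
  refine strictMonoOn_of_deriv_pos (convex_Icc a b)
    (hf.continuousOn.mono (Icc_subset_Icc ha hb)) ?_
  rw [interior_Icc]
  exact fun r hr => (radialFlux_pos_iff ⟨ha.trans_lt hr.1, hr.2.trans_le hb⟩).1 (hF r hr)

lemma strictAntiOn_radialFlux {a b : ℝ} (hα : 0 ≤ α) (hR : 0 < R) (ha : 0 ≤ a) (hb : b ≤ R)
    (hf : ContDiffOn ℝ 2 f (Icc 0 R)) (hsol : IsRadialSolution α f h (Ioo a b))
    (hh : ∀ r ∈ Ioo a b, 0 < h r) :
    StrictAntiOn (radialFlux α R f) (Icc a b) := by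
  refine strictAntiOn_of_deriv_neg (convex_Icc a b)
    ((continuousOn_radialFlux hα hR hf).mono (Icc_subset_Icc ha hb)) ?_
  rw [interior_Icc]
  intro r hr
  have hr' : r ∈ Ioo 0 R := ⟨ha.trans_lt hr.1, hr.2.trans_le hb⟩
  rw [(radialFlux_eventuallyEq hr').deriv_eq, hsol r hr, neg_lt_zero]
  exact mul_pos (Real.rpow_pos_of_pos hr'.1 α) (hh r hr)

lemma strictMonoOn_radialFlux {a b : ℝ} (hα : 0 ≤ α) (hR : 0 < R) (ha : 0 ≤ a) (hb : b ≤ R)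
    (hf : ContDiffOn ℝ 2 f (Icc 0 R)) (hsol : IsRadialSolution α f h (Ioo a b))
    (hh : ∀ r ∈ Ioo a b, h r < 0) :
    StrictMonoOn (radialFlux α R f) (Icc a b) := by
  refine strictMonoOn_of_deriv_pos (convex_Icc a b)
    ((continuousOn_radialFlux hα hR hf).mono (Icc_subset_Icc ha hb)) ?_
  rw [interior_Icc]
  intro r hr
  have hr' : r ∈ Ioo 0 R := ⟨ha.trans_lt hr.1, hr.2.trans_le hb⟩
  rw [(radialFlux_eventuallyEq hr').deriv_eq, hsol r hr, neg_pos]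
  exact mul_neg_of_pos_of_neg (Real.rpow_pos_of_pos hr'.1 α) (hh r hr)

lemma pos_of_radialFlux_neg (hf : ContDiffOn ℝ 2 f (Icc 0 R))
    (hF : ∀ r ∈ Ioo 0 R, radialFlux α R f r < 0) (hfR : f R = 0) :
    ∀ r ∈ Ico 0 R, 0 < f r := fun _ hr =>
  hfR ▸ strictAntiOn_of_radialFlux_neg le_rfl le_rfl hf hF (Ico_subset_Icc_self hr)
    (right_mem_Icc.2 (hr.1.trans hr.2.le)) hr.2

lemma neg_of_radialFlux_pos (hf : ContDiffOn ℝ 2 f (Icc 0 R))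
    (hF : ∀ r ∈ Ioo 0 R, 0 < radialFlux α R f r) (hfR : f R = 0) :
    ∀ r ∈ Ico 0 R, f r < 0 := fun _ hr =>
  hfR ▸ strictMonoOn_of_radialFlux_pos le_rfl le_rfl hf hF (Ico_subset_Icc_self hr)
    (right_mem_Icc.2 (hr.1.trans hr.2.le)) hr.2

lemma IsRadialSolution.pos_of_pos (hα : 0 < α) (hR : 0 < R) (hf : ContDiffOn ℝ 2 f (Icc 0 R))
    (hsol : IsRadialSolution α f h (Ioo 0 R)) (hh : ∀ r ∈ Ioo 0 R, 0 < h r) (hfR : f R = 0) :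
    ∀ r ∈ Ico 0 R, 0 < f r := by
  have hF := strictAntiOn_radialFlux hα.le hR le_rfl le_rfl hf hsol hh
  refine pos_of_radialFlux_neg (α := α) hf (fun r hr => ?_) hfR
  exact radialFlux_zero hα.ne' ▸ hF (left_mem_Icc.2 hR.le) (Ioo_subset_Icc_self hr) hr.1

lemma IsRadialSolution.neg_of_neg (hα : 0 < α) (hR : 0 < R) (hf : ContDiffOn ℝ 2 f (Icc 0 R))
    (hsol : IsRadialSolution α f h (Ioo 0 R)) (hh : ∀ r ∈ Ioo 0 R, h r < 0) (hfR : f R = 0) :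
    ∀ r ∈ Ico 0 R, f r < 0 := by
  have hF := strictMonoOn_radialFlux hα.le hR le_rfl le_rfl hf hsol hh
  refine neg_of_radialFlux_pos (α := α) hf (fun r hr => ?_) hfR
  exact radialFlux_zero hα.ne' ▸ hF (left_mem_Icc.2 hR.le) (Ioo_subset_Icc_self hr) hr.1

lemma IsRadialSolution.radialFlux_neg_or_exists_sign_change {c : ℝ} (hα : 0 < α)
    (hR : 0 < R) (hf : ContDiffOn ℝ 2 f (Icc 0 R)) (hsol : IsRadialSolution α f h (Ioo 0 R))
    (hc : c ∈ Ioo 0 R) (hh_pos : ∀ r ∈ Ioo 0 c, 0 < h r) (hh_neg : ∀ r ∈ Ioo c R, h r < 0) :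
    (∀ r ∈ Ioo 0 R, radialFlux α R f r < 0) ∨
      ∃ σ ∈ Ioo c R, radialFlux α R f σ = 0 ∧ (∀ r ∈ Ioo 0 σ, radialFlux α R f r < 0) ∧
        ∀ r ∈ Ioo σ R, 0 < radialFlux α R f r :=
  neg_or_exists_sign_change_of_strictAntiOn_of_strictMonoOn hc.1
    (strictAntiOn_radialFlux hα.le hR le_rfl hc.2.le hf
      (fun r hr => hsol r ⟨hr.1, hr.2.trans hc.2⟩) hh_pos)
    (strictMonoOn_radialFlux hα.le hR hc.1.le le_rfl hf
      (fun r hr => hsol r ⟨hc.1.trans hr.1, hr.2⟩) hh_neg)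
    ((continuousOn_radialFlux hα.le hR hf).mono (Icc_subset_Icc_left hc.1.le))
    (radialFlux_zero hα.ne')

lemma neg_or_exists_zero_of_radialFlux {σ : ℝ} (hf : ContDiffOn ℝ 2 f (Icc 0 R))
    (hσ : σ ∈ Ioo 0 R) (hF_neg : ∀ r ∈ Ioo 0 σ, radialFlux α R f r < 0)
    (hF_pos : ∀ r ∈ Ioo σ R, 0 < radialFlux α R f r) (hfR : f R = 0) :
    (∀ r ∈ Ioo 0 R, f r < 0) ∨
      ∃ z ∈ Ioo 0 σ, f z = 0 ∧ (∀ r ∈ Ico 0 z, 0 < f r) ∧ ∀ r ∈ Ioo z R, f r < 0 :=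
  neg_or_exists_zero_of_strictAntiOn_of_strictMonoOn hσ.1.le hσ.2
    (strictAntiOn_of_radialFlux_neg le_rfl hσ.2.le hf hF_neg)
    (strictMonoOn_of_radialFlux_pos hσ.1.le le_rfl hf hF_pos)
    (hf.continuousOn.mono (Icc_subset_Icc_right hσ.2.le)) hfR

end RadialFlux

theorem radial_profile_ball_two_nodal_zones_general (N : ℕ) (hN : 2 ≤ N) (R : ℝ) (hR : 0 < R)
    (u v : ℝ → ℝ) (Hu Hv : ℝ → ℝ → ℝ)
    (hu : ContDiffOn ℝ 2 u (Icc 0 R)) (hv : ContDiffOn ℝ 2 v (Icc 0 R))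
    (hequ : ∀ r ∈ Ioo (0:ℝ) R,
      deriv (fun ρ => ρ ^ ((N : ℝ) - 1) * deriv u ρ) r
        = -(r ^ ((N : ℝ) - 1) * Hv (u r) (v r)))
    (heqv : ∀ r ∈ Ioo (0:ℝ) R,
      deriv (fun ρ => ρ ^ ((N : ℝ) - 1) * deriv v ρ) r
        = -(r ^ ((N : ℝ) - 1) * Hu (u r) (v r)))
    (huR : u R = 0) (hvR : v R = 0)
    (hH1u : ∀ s t : ℝ, s ≠ 0 → 0 < Hu s t / s)
    (hH1v : ∀ s t : ℝ, t ≠ 0 → 0 < Hv s t / t)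
    (t₀ : ℝ) (ht₀ : t₀ ∈ Ioo (0:ℝ) R)
    (hv1 : ∀ r ∈ Ico (0:ℝ) t₀, 0 < v r) (hvt₀ : v t₀ = 0)
    (hv2 : ∀ r ∈ Ioo t₀ R, v r < 0) :
    ∃ σ ∈ Ioo t₀ R, ∃ z ∈ Ioo (0:ℝ) R,
      u z = 0 ∧ (∀ r ∈ Ico (0:ℝ) z, 0 < u r) ∧ (∀ r ∈ Ioo z R, u r < 0) ∧
      deriv u σ = 0 ∧ (∀ r ∈ Ioo (0:ℝ) σ, deriv u r < 0) ∧
      (∀ r ∈ Ioo σ R, 0 < deriv u r) := by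
  have hα : (0:ℝ) < (N:ℝ) - 1 := by
    have : (2:ℝ) ≤ N := by exact_mod_cast hN
    linarith
  have hHu_pos : ∀ s t, 0 < s → 0 < Hu s t := fun s t hs =>
    (div_pos_iff_of_pos_right hs).1 (hH1u s t hs.ne')
  have hHu_neg : ∀ s t, s < 0 → Hu s t < 0 := fun s t hs =>
    neg_of_div_pos_of_neg (hH1u s t hs.ne) hs
  have hHv_pos : ∀ s t, 0 < t → 0 < Hv s t := fun s t ht =>
    (div_pos_iff_of_pos_right ht).1 (hH1v s t ht.ne')
  have hHv_neg : ∀ s t, t < 0 → Hv s t < 0 := fun s t ht =>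
    neg_of_div_pos_of_neg (hH1v s t ht.ne) ht
  rcases IsRadialSolution.radialFlux_neg_or_exists_sign_change hα hR hu hequ ht₀
    (fun r hr => hHv_pos _ _ (hv1 r (Ioo_subset_Ico_self hr)))
    (fun r hr => hHv_neg _ _ (hv2 r hr))
    with hF_neg | ⟨σ, hσ, hFσ, hF_neg, hF_pos⟩
  · have hu_pos := pos_of_radialFlux_neg hu hF_neg huR
    have hv_pos := IsRadialSolution.pos_of_pos hα hR hv heqv
      (fun r hr => hHu_pos _ _ (hu_pos r (Ioo_subset_Ico_self hr))) hvR
    exact absurd hvt₀ (hv_pos t₀ (Ioo_subset_Ico_self ht₀)).ne'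
  have hσR : σ ∈ Ioo 0 R := ⟨ht₀.1.trans hσ.1, hσ.2⟩
  rcases neg_or_exists_zero_of_radialFlux hu hσR hF_neg hF_pos huR
    with hu_neg | ⟨z, hz, huz, hu_pos, hu_neg⟩
  · have hv_neg := IsRadialSolution.neg_of_neg hα hR hv heqv
      (fun r hr => hHu_neg _ _ (hu_neg r hr)) hvR
    exact absurd (hv1 0 ⟨le_rfl, ht₀.1⟩) (hv_neg 0 ⟨le_rfl, hR⟩).not_gt
  refine ⟨σ, hσ, z, ⟨hz.1, hz.2.trans hσ.2⟩, huz, hu_pos, hu_neg,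
    (radialFlux_eq_zero_iff hσR).1 hFσ, fun r hr => ?_, fun r hr => ?_⟩
  · exact (radialFlux_neg_iff ⟨hr.1, hr.2.trans hσ.2⟩).1 (hF_neg r hr)
  · exact (radialFlux_pos_iff ⟨hσR.1.trans hr.1, hr.2⟩).1 (hF_pos r hr)

/-- Part B (case `m = 2`) of the profile proposition on a ball: for the radial
Hamiltonian system `-(r^{N-1}u')' = r^{N-1}H_v(u,v)`, `-(r^{N-1}v')' = r^{N-1}H_u(u,v)`
with coupling `H_u(s,t)/s > 0`, `H_v(s,t)/t > 0` for `s,t ≠ 0`, if `v` has exactly two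
nodal zones (`v > 0` on `[0,t₀)`, `v(t₀)=0`, `v < 0` on `(t₀,R)`), then `u` has exactly
one interior zero `z`, is positive on its first nodal zone and negative on the second,
and has exactly one critical point `σ ∈ (t₀,R)`, with `u` strictly decreasing on
`(0,σ)` and strictly increasing on `(σ,R)`. -/
theorem radial_profile_ball_two_nodal_zones (N : ℕ) (hN : 2 ≤ N) (R : ℝ) (hR : 0 < R)
    (u v : ℝ → ℝ) (Hu Hv : ℝ → ℝ → ℝ)
    (hu : ContDiffOn ℝ 2 u (Icc 0 R)) (hv : ContDiffOn ℝ 2 v (Icc 0 R))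
    (hequ : ∀ r ∈ Ioo (0:ℝ) R,
      deriv (fun ρ => ρ ^ ((N : ℝ) - 1) * deriv u ρ) r
        = -(r ^ ((N : ℝ) - 1) * Hv (u r) (v r)))
    (heqv : ∀ r ∈ Ioo (0:ℝ) R,
      deriv (fun ρ => ρ ^ ((N : ℝ) - 1) * deriv v ρ) r
        = -(r ^ ((N : ℝ) - 1) * Hu (u r) (v r)))
    (hu0 : deriv u 0 = 0) (hv0 : deriv v 0 = 0)
    (huR : u R = 0) (hvR : v R = 0)
    (hH1u : ∀ s t : ℝ, s ≠ 0 → 0 < Hu s t / s)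
    (hH1v : ∀ s t : ℝ, t ≠ 0 → 0 < Hv s t / t)
    (t₀ : ℝ) (ht₀ : t₀ ∈ Ioo (0:ℝ) R)
    (hv1 : ∀ r ∈ Ico (0:ℝ) t₀, 0 < v r) (hvt₀ : v t₀ = 0)
    (hv2 : ∀ r ∈ Ioo t₀ R, v r < 0) :
    ∃ σ ∈ Ioo t₀ R, ∃ z ∈ Ioo (0:ℝ) R,
      u z = 0 ∧ (∀ r ∈ Ico (0:ℝ) z, 0 < u r) ∧ (∀ r ∈ Ioo z R, u r < 0) ∧
      deriv u σ = 0 ∧ (∀ r ∈ Ioo (0:ℝ) σ, deriv u r < 0) ∧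
      (∀ r ∈ Ioo σ R, 0 < deriv u r) :=
  radial_profile_ball_two_nodal_zones_general N hN R hR u v Hu Hv hu hv hequ heqv huR hvR hH1u hH1v
    t₀ ht₀ hv1 hvt₀ hv2
end
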